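/- (No-signalling from terminality, Bell scenario.) Let C be a symmetric monoidal category whose unit I is terminal. Let Φ : X_A ⊗ X_B → Y_A ⊗ Y_B be any morphism of the form Φ = (f_A ⊗ f_B) ∘ (id_{X_A} ⊗ σ ⊗ id_{X_B}) ∘ (id ⊗ c ⊗ id) for a shared state c : I → S_A ⊗ S_B, where f_A : X_A ⊗ S_A → Y_A and f_B : S_B ⊗ X_B → Y_B (with suitable associators). Then discarding B's output yields (⊤_{Y_B}) applied to Φ equal to Φ' ⊗ ⊤_{X_B} for some morphism Φ' : X_A → Y_A, i.e., (id_{Y_A} ⊗ ⊤_{Y_B}) ∘ Φ = ρ_{Y_A}^{-1} ∘ Φ' ∘ ρ_{X_A} ∘ (id_{X_A} ⊗ ⊤_{X_B}) where ρ is the right unitor. In particular B's input cannot affect A's output. -/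

import Mathlib

/-!
Because the unit is terminal, discarding an output is the unique morphism to `𝟙_ C`, so
discarding whatever B's local process produces is the same as discarding its inputs. Hence
B's input `XB` is discarded at once, and the A-side marginal is `fA` applied to `XA` together
with the half of the shared state `c` whose partner `SB` has been discarded.
-/

open CategoryTheory CategoryTheory.Limits CategoryTheory.MonoidalCategory

namespace CategoryTheory.Limits.IsTerminal

variable {C : Type*} [Category C] [MonoidalCategory C] (hT : IsTerminal (𝟙_ C))

/-- The second input of `Φ` cannot influence its first output. -/
def NoSignalling {X X' Y Y' : C} (Φ : X ⊗ X' ⟶ Y ⊗ Y') : Prop :=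
  ∃ Φ' : X ⟶ Y, Φ ≫ (Y ◁ hT.from Y') = (X ◁ hT.from X') ≫ (ρ_ X).hom ≫ Φ' ≫ (ρ_ Y).inv

variable {hT}

theorem NoSignalling.comp_tensorHom {X X' Y Y' Z Z' : C} {Φ : X ⊗ X' ⟶ Z ⊗ Z'}
    (hΦ : hT.NoSignalling Φ) (f : Z ⟶ Y) (g : Z' ⟶ Y') : hT.NoSignalling (Φ ≫ (f ⊗ₘ g)) := by
  obtain ⟨Φ', hΦ'⟩ := hΦ
  refine ⟨Φ' ≫ f, ?_⟩
  have hg : g ≫ hT.from Y' = hT.from Z' := hT.hom_ext _ _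
  calc (Φ ≫ (f ⊗ₘ g)) ≫ (Y ◁ hT.from Y')
      = (Φ ≫ (Z ◁ hT.from Z')) ≫ f ▷ 𝟙_ C := by
        rw [Category.assoc, tensorHom_def', Category.assoc, ← whisker_exchange,
          ← MonoidalCategory.whiskerLeft_comp_assoc, hg, Category.assoc]
    _ = _ := by rw [hΦ']; simp only [whiskerRight_id, Category.assoc, Iso.inv_hom_id_assoc]

theorem noSignalling_whiskerRight_comp_associator {X X' Z W : C} (Q : X ⟶ Z ⊗ W) :
    hT.NoSignalling ((Q ▷ X') ≫ (α_ Z W X').hom) := by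
  refine ⟨Q ≫ (Z ◁ hT.from W) ≫ (ρ_ Z).hom, ?_⟩
  have hdiscard : hT.from (W ⊗ X') = (W ◁ hT.from X') ≫ (ρ_ W).hom ≫ hT.from W :=
    hT.hom_ext _ _
  rw [hdiscard]
  simp only [MonoidalCategory.whiskerLeft_comp, Category.assoc]
  rw [← associator_naturality_right_assoc, ← whisker_exchange_assoc,
    ← rightUnitor_tensor_hom_assoc, rightUnitor_naturality_assoc]
  simp only [Iso.hom_inv_id, Category.comp_id]

end CategoryTheory.Limits.IsTerminal

theorem no_signalling_bell_general
    (C : Type*) [Category C] [MonoidalCategory C]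
    (hT : IsTerminal (𝟙_ C))
    (XA XB YA YB SA SB : C)
    (c : 𝟙_ C ⟶ SA ⊗ SB) (fA : XA ⊗ SA ⟶ YA) (fB : SB ⊗ XB ⟶ YB)
    (Φ : XA ⊗ XB ⟶ YA ⊗ YB)
    (hΦ : Φ = ((ρ_ XA).inv ⊗ₘ 𝟙 XB) ≫ ((𝟙 XA ⊗ₘ c) ⊗ₘ 𝟙 XB) ≫
      ((α_ XA SA SB).inv ⊗ₘ 𝟙 XB) ≫ (α_ (XA ⊗ SA) SB XB).hom ≫ (fA ⊗ₘ fB)) :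
    ∃ Φ' : XA ⟶ YA,
      Φ ≫ (𝟙 YA ⊗ₘ hT.from YB) =
        (𝟙 XA ⊗ₘ hT.from XB) ≫ (ρ_ XA).hom ≫ Φ' ≫ (ρ_ YA).inv := by
  have hPrepare : hT.NoSignalling ((((ρ_ XA).inv ≫ (XA ◁ c) ≫ (α_ XA SA SB).inv) ▷ XB) ≫
      (α_ (XA ⊗ SA) SB XB).hom) :=
    IsTerminal.noSignalling_whiskerRight_comp_associator _
  obtain ⟨Φ', hΦ'⟩ := hPrepare.comp_tensorHom fA fB
  refine ⟨Φ', ?_⟩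
  subst hΦ
  simpa only [tensorHom_id, id_tensorHom, comp_whiskerRight, Category.assoc] using hΦ'

theorem no_signalling_bell
    (C : Type*) [Category C] [MonoidalCategory C] [SymmetricCategory C]
    (hT : IsTerminal (𝟙_ C))
    (XA XB YA YB SA SB : C)
    (c : 𝟙_ C ⟶ SA ⊗ SB) (fA : XA ⊗ SA ⟶ YA) (fB : SB ⊗ XB ⟶ YB)
    (Φ : XA ⊗ XB ⟶ YA ⊗ YB)
    (hΦ : Φ = ((ρ_ XA).inv ⊗ₘ 𝟙 XB) ≫ ((𝟙 XA ⊗ₘ c) ⊗ₘ 𝟙 XB) ≫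
      ((α_ XA SA SB).inv ⊗ₘ 𝟙 XB) ≫ (α_ (XA ⊗ SA) SB XB).hom ≫ (fA ⊗ₘ fB)) :
    ∃ Φ' : XA ⟶ YA,
      Φ ≫ (𝟙 YA ⊗ₘ hT.from YB) =
        (𝟙 XA ⊗ₘ hT.from XB) ≫ (ρ_ XA).hom ≫ Φ' ≫ (ρ_ YA).inv :=
  no_signalling_bell_general C hT XA XB YA YB SA SB c fA fB Φ hΦ
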